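/- Let 𝒜 = ⟨A,R⟩ be an almost bounded structure and 𝒜^* any ultrapower of 𝒜. If there is an embedding h of 𝒜^♭ into 𝒜^♯ that is elementary in the language L_{S,P}, then h is an elementary embedding of 𝒜^ue into 𝒜^* in the language with one binary relation symbol (interpreted as R^ue and R^* respectively); in particular 𝒜^♭ ⪯ 𝒜^♯ implies 𝒜^ue ⪯ 𝒜^*. -/

import Mathlib

open FirstOrder Cardinal

namespace UEx

/-- Elements of infinite in- or out-degree. -/
def RInf (R : A → A → Prop) : Set A :=
  {w | {v | R w v}.Infinite ∨ {v | R v w}.Infinite}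

/-- A uniform finite bound on all in- and out-degrees. -/
def Bounded (R : A → A → Prop) : Prop :=
  ∃ n : ℕ, ∀ w : A, {v | R w v}.Finite ∧ {v | R v w}.Finite ∧
    {v | R w v}.ncard ≤ n ∧ {v | R v w}.ncard ≤ n

/-- Almost bounded: finitely many elements of infinite degree, and a uniform
finite bound on the degrees of the remaining elements. -/
def AlmostBounded (R : A → A → Prop) : Prop :=
  (RInf R).Finite ∧ ∃ n : ℕ, ∀ w ∉ RInf R,
    {v | R w v}.ncard ≤ n ∧ {v | R v w}.ncard ≤ n

/-- P = {(s,t) ∈ R : s ∈ R∞ or t ∈ R∞}. -/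
def PRel (R : A → A → Prop) (s t : A) : Prop := R s t ∧ (s ∈ RInf R ∨ t ∈ RInf R)

/-- S = R \ P. -/
def SRel (R : A → A → Prop) (s t : A) : Prop := R s t ∧ ¬(s ∈ RInf R ∨ t ∈ RInf R)

/-- The ultrafilter extension of a binary relation. -/
def ueRel (Q : A → A → Prop) (u v : Ultrafilter A) : Prop :=
  ∀ X ∈ v, {w | ∃ s ∈ X, Q w s} ∈ u

/-- The setoid of 𝒟-a.e. equality on `I → A`. -/
def upSetoid (𝒟 : Ultrafilter I) (A : Type*) : Setoid (I → A) where
  r a b := {i | a i = b i} ∈ 𝒟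
  iseqv := by
    refine ⟨fun a => ?_, fun {a b} h => ?_, fun {a b c} h1 h2 => ?_⟩
    · have : {i | a i = a i} = (Set.univ : Set I) := by simp
      rw [this]
      exact Filter.univ_mem
    · exact Filter.mem_of_superset h fun i hi => (hi : _ = _).symm
    · exact Filter.mem_of_superset (Filter.inter_mem h1 h2) fun i hi =>
        (hi.1 : _ = _).trans hi.2

/-- The ultrapower of `A` modulo the ultrafilter `𝒟`. -/
def UP (𝒟 : Ultrafilter I) (A : Type*) : Type _ := Quotient (upSetoid 𝒟 A)

/-- The diagonal embedding into the ultrapower. -/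
def diag (𝒟 : Ultrafilter I) (a : A) : UP 𝒟 A := Quotient.mk (upSetoid 𝒟 A) fun _ => a

/-- The relation on the ultrapower given by Łoś's theorem. -/
def upRel (𝒟 : Ultrafilter I) (Q : A → A → Prop) : UP 𝒟 A → UP 𝒟 A → Prop :=
  Quotient.lift₂ (fun a b => {i | Q (a i) (b i)} ∈ 𝒟) <| by
    intro a b a' b' ha hb
    have ha' : {i | a i = a' i} ∈ 𝒟 := ha
    have hb' : {i | b i = b' i} ∈ 𝒟 := hb
    refine propext ⟨fun h => ?_, fun h => ?_⟩
    · refine Filter.mem_of_superset (Filter.inter_mem (Filter.inter_mem h ha') hb') ?_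
      rintro i ⟨⟨h1, h2⟩, h3⟩
      simp only [Set.mem_setOf_eq] at *
      rw [← h2, ← h3]; exact h1
    · refine Filter.mem_of_superset (Filter.inter_mem (Filter.inter_mem h ha') hb') ?_
      rintro i ⟨⟨h1, h2⟩, h3⟩
      simp only [Set.mem_setOf_eq] at *
      rw [h2, h3]; exact h1

/-- `𝒟` is `κ`-regular. -/
def IsRegular (𝒟 : Ultrafilter I) (κ : Cardinal) : Prop :=
  ∃ E : Set (Set I), (∀ X ∈ E, X ∈ 𝒟) ∧ #E = κ ∧ ∀ i : I, {X ∈ E | i ∈ X}.Finite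

/-- A first-order language with constant symbols indexed by `Consts` and binary
relation symbols indexed by `Rels`. -/
def Lang (Consts Rels : Type*) : Language :=
  ⟨fun n => match n with | 0 => Consts | _ + 1 => PEmpty,
   fun n => match n with | 2 => Rels | _ => PEmpty⟩

/-- A structure for `Lang Consts Rels` from interpretations of the constants and
the binary relations. -/
def mkStruct {Consts Rels B : Type*} (cs : Consts → B) (rs : Rels → B → B → Prop) :
    (Lang Consts Rels).Structure B where
  funMap {n} f _x :=
    match n, f with
    | 0, c => cs c
    | _ + 1, f => PEmpty.elim f
  RelMap {n} r x :=
    match n, r with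
    | 0, r => PEmpty.elim r
    | 1, r => PEmpty.elim r
    | 2, r => rs r (x 0) (x 1)
    | _ + 3, r => PEmpty.elim r

/-- The language with a single binary relation symbol. -/
abbrev L2 : Language := Lang Empty Unit

/-- The structure on `B` in the language of a single binary relation symbol,
interpreted by `Q`. -/
def struct2 {B : Type*} (Q : B → B → Prop) : L2.Structure B :=
  mkStruct Empty.elim fun _ => Q

/-- The `L_R`-structure (`R` together with constants for `R_∞`) on the ultrafilter
extension: `R` is interpreted as `R^ue`, the constant `d_w` as `π_w`. -/
def structRue {A : Type*} (R : A → A → Prop) :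
    (Lang (RInf R) Unit).Structure (Ultrafilter A) :=
  mkStruct (fun c => pure (c : A)) fun _ => ueRel R

/-- The `L_{S,P}`-structure `𝒜^♭` on the ultrafilter extension: `true` is interpreted
as `S^ue`, `false` as `P^ue`, and the constant `d_w` as `π_w`. -/
def structSPue {A : Type*} (R : A → A → Prop) :
    (Lang (RInf R) Bool).Structure (Ultrafilter A) :=
  mkStruct (fun c => pure (c : A)) fun b => cond b (ueRel (SRel R)) (ueRel (PRel R))

/-- The `L_R`-structure on the ultrapower: `R` is interpreted as `R^*` and the
constant `d_w` as the diagonal image of `w`. -/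
def structRup {A I : Type*} (R : A → A → Prop) (𝒟 : Ultrafilter I) :
    (Lang (RInf R) Unit).Structure (UP 𝒟 A) :=
  mkStruct (fun c => diag 𝒟 (c : A)) fun _ => upRel 𝒟 R

/-- The `L_{S,P}`-structure `𝒜^♯` on the ultrapower: `true` is interpreted as `S^*`,
`false` as `P^*`, and the constant `d_w` as the diagonal image of `w`. -/
def structSPup {A I : Type*} (R : A → A → Prop) (𝒟 : Ultrafilter I) :
    (Lang (RInf R) Bool).Structure (UP 𝒟 A) :=
  mkStruct (fun c => diag 𝒟 (c : A)) fun b => cond b (upRel 𝒟 (SRel R)) (upRel 𝒟 (PRel R))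
/-- Map an `L2`-term to a term of any `Lang C Rels` (terms are just variables). -/
def tmap {C Rels α : Type*} : L2.Term α → (Lang C Rels).Term α
  | .var x => .var x
  | @Language.Term.func _ _ 0 f _ => f.elim
  | @Language.Term.func _ _ (_ + 1) f _ => f.elim

/-- Translate an `L2` formula into the `S,P` language, replacing the relation
symbol by the disjunction of the two relation symbols. -/
def tr {C α : Type*} : ∀ {n : ℕ}, L2.BoundedFormula α n → (Lang C Bool).BoundedFormula α n
  | _, .falsum => .falsum
  | _, .equal t₁ t₂ => .equal (tmap t₁) (tmap t₂)
  | _, @Language.BoundedFormula.rel _ _ _ 2 _ ts =>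
      (Language.BoundedFormula.rel (l := 2) true fun i => tmap (ts i)) ⊔
      (Language.BoundedFormula.rel (l := 2) false fun i => tmap (ts i))
  | _, @Language.BoundedFormula.rel _ _ _ 0 r _ => r.elim
  | _, @Language.BoundedFormula.rel _ _ _ 1 r _ => r.elim
  | _, @Language.BoundedFormula.rel _ _ _ (_ + 3) r _ => r.elim
  | _, .imp φ ψ => .imp (tr φ) (tr ψ)
  | _, .all φ => .all (tr φ)

lemma realize_tmap {B C Rels α : Type*} (Q : B → B → Prop)
    (cs : C → B) (rs : Rels → B → B → Prop) (v : α → B) :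
    ∀ t : L2.Term α,
      @Language.Term.realize _ B (mkStruct cs rs) _ v (tmap t) =
      @Language.Term.realize L2 B (struct2 Q) _ v t
  | .var _ => rfl
  | @Language.Term.func _ _ 0 f _ => f.elim
  | @Language.Term.func _ _ (_ + 1) f _ => f.elim

lemma realize_tr {B C α : Type*} (Q Qs Qp : B → B → Prop) (cs : C → B)
    (hQ : ∀ u v, Q u v ↔ Qs u v ∨ Qp u v) :
    ∀ {n : ℕ} (φ : L2.BoundedFormula α n) (v : α → B) (xs : Fin n → B),
      @Language.BoundedFormula.Realize _ B (mkStruct cs fun b => cond b Qs Qp) α n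
        (tr φ) v xs ↔
      @Language.BoundedFormula.Realize L2 B (struct2 Q) α n φ v xs
  | _, .falsum, _, _ => Iff.rfl
  | _, .equal t₁ t₂, v, xs => by
      simp only [tr, Language.BoundedFormula.Realize, realize_tmap Q cs _]
  | _, @Language.BoundedFormula.rel _ _ _ 2 r ts, v, xs => by
      have hre := fun i => realize_tmap (C := C) Q cs (fun b => cond b Qs Qp)
        (Sum.elim v xs) (ts i)
      letI := mkStruct cs fun b => cond b Qs Qp
      letI := struct2 Q
      simp only [tr, Language.BoundedFormula.realize_sup,
        Language.BoundedFormula.realize_rel]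
      show (Qs _ _ ∨ Qp _ _) ↔ Q _ _
      simp only [hre]
      exact (hQ _ _).symm
  | _, @Language.BoundedFormula.rel _ _ _ 0 r _, _, _ => r.elim
  | _, @Language.BoundedFormula.rel _ _ _ 1 r _, _, _ => r.elim
  | _, @Language.BoundedFormula.rel _ _ _ (_ + 3) r _, _, _ => r.elim
  | _, .imp φ ψ, v, xs => by
      simp only [Language.BoundedFormula.Realize]
      exact imp_congr (realize_tr Q Qs Qp cs hQ φ v xs) (realize_tr Q Qs Qp cs hQ ψ v xs)
  | _, .all φ, v, xs => by
      simp only [Language.BoundedFormula.Realize]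
      exact forall_congr' fun a => realize_tr Q Qs Qp cs hQ φ v (Fin.snoc xs a)

lemma ueRel_iff {A : Type*} (R : A → A → Prop) (u v : Ultrafilter A) :
    ueRel R u v ↔ ueRel (SRel R) u v ∨ ueRel (PRel R) u v := by
  constructor
  · intro hR
    by_contra hc
    push_neg at hc
    obtain ⟨hS, hP⟩ := hc
    simp only [ueRel, not_forall] at hS hP
    obtain ⟨X, hXv, hXu⟩ := hS
    obtain ⟨Y, hYv, hYu⟩ := hP
    have hXY := hR (X ∩ Y) (v.toFilter.inter_mem hXv hYv)
    have hsub : {w | ∃ s ∈ X ∩ Y, R w s} ⊆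
        {w | ∃ s ∈ X, SRel R w s} ∪ {w | ∃ s ∈ Y, PRel R w s} := by
      rintro w ⟨s, ⟨hsX, hsY⟩, hws⟩
      by_cases hmem : s ∈ RInf R ∨ w ∈ RInf R
      · exact Or.inr ⟨s, hsY, hws, hmem.symm⟩
      · push_neg at hmem
        exact Or.inl ⟨s, hsX, hws, by tauto⟩
    have := Filter.mem_of_superset hXY hsub
    rcases Ultrafilter.union_mem_iff.mp this with h' | h'
    exacts [hXu h', hYu h']
  · rintro (hS | hP) X hX
    · exact Filter.mem_of_superset (hS X hX) fun w ⟨s, hs, h1, _⟩ => ⟨s, hs, h1⟩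
    · exact Filter.mem_of_superset (hP X hX) fun w ⟨s, hs, h1, _⟩ => ⟨s, hs, h1⟩

lemma upRel_iff {A I : Type*} (R : A → A → Prop) (𝒟 : Ultrafilter I)
    (a b : UP 𝒟 A) :
    upRel 𝒟 R a b ↔ upRel 𝒟 (SRel R) a b ∨ upRel 𝒟 (PRel R) a b := by
  induction a using Quotient.inductionOn with | h a =>
  induction b using Quotient.inductionOn with | h b =>
  show {i | R (a i) (b i)} ∈ 𝒟 ↔ {i | SRel R (a i) (b i)} ∈ 𝒟 ∨ {i | PRel R (a i) (b i)} ∈ 𝒟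
  rw [← Ultrafilter.union_mem_iff]
  have key : ∀ s t : A, R s t ↔ SRel R s t ∨ PRel R s t := by
    intro s t
    constructor
    · intro hr
      by_cases hc : s ∈ RInf R ∨ t ∈ RInf R
      · exact Or.inr ⟨hr, hc⟩
      · exact Or.inl ⟨hr, hc⟩
    · rintro (⟨h1, _⟩ | ⟨h1, _⟩) <;> exact h1
  congr! 1
  ext i
  simp only [Set.mem_setOf_eq, Set.mem_union]
  exact key _ _

/-- If `g : 𝒜^♭ → 𝒜^♯` is an elementary embedding in the language `L_{S,P}`, then
`g` is an elementary embedding of `𝒜^ue` into `𝒜^*` in the language with one binary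
relation symbol; in particular `𝒜^♭ ⪯ 𝒜^♯` implies `𝒜^ue ⪯ 𝒜^*`. -/
theorem prop_transfer {A I : Type*} [Infinite I] (R : A → A → Prop)
    (𝒟 : Ultrafilter I) (h : AlmostBounded R)
    (g : Ultrafilter A → UP 𝒟 A)
    (hg : ∀ (k : ℕ) (φ : (Lang (RInf R) Bool).Formula (Fin k)) (x : Fin k → Ultrafilter A),
      @Language.Formula.Realize _ _ (structSPup R 𝒟) _ φ (fun i => g (x i)) ↔
      @Language.Formula.Realize _ _ (structSPue R) _ φ x) :
    ∀ (k : ℕ) (φ : L2.Formula (Fin k)) (x : Fin k → Ultrafilter A),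
      @Language.Formula.Realize L2 (UP 𝒟 A) (struct2 (upRel 𝒟 R)) _ φ (fun i => g (x i)) ↔
      @Language.Formula.Realize L2 (Ultrafilter A) (struct2 (ueRel R)) _ φ x := by
  intro k φ x
  have h1 := realize_tr (upRel 𝒟 R) (upRel 𝒟 (SRel R)) (upRel 𝒟 (PRel R))
    (fun c : RInf R => diag 𝒟 (c : A)) (upRel_iff R 𝒟) φ (fun i => g (x i)) default
  have h2 := realize_tr (ueRel R) (ueRel (SRel R)) (ueRel (PRel R))
    (fun c : RInf R => pure (c : A)) (ueRel_iff R) φ x default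
  have h3 := hg k (tr φ) x
  exact (h1.symm.trans h3).trans h2

end UEx
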